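/- arXiv:1109.0418 — 3 statements merged into one kernel-verified Lean document; each statement's English description precedes it below -/
import Mathlib

section
/- The max-consensus protocol x(k) = A^k ⊗ x(0) converges to consensus for all initial conditions if and only if there exists k ∈ ℕ such that A^k = 𝟎. That is: (∃ k, ∀ initial vector x(0) ∈ ℝ^N, ∀ i, (A^k ⊗ x(0))_i = max_j x_j(0)) if and only if ∃ k with A^k = 𝟎. -/
open Finset

/-- Square matrices over the binary tropical semiring `{0, -∞} ⊆ ℝ ∪ {-∞}`,
modeled with entries in `WithBot ℝ` (where `⊥` plays the role of `-∞`). -/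
abbrev TMat (N : ℕ) := Matrix (Fin N) (Fin N) (WithBot ℝ)

/-- A tropical adjacency matrix: all entries in `{0, -∞}` and zero diagonal. -/
def IsTropAdj {N : ℕ} (A : TMat N) : Prop :=
  (∀ i j, A i j = 0 ∨ A i j = ⊥) ∧ ∀ i, A i i = 0

/-- Tropical matrix product: `(A ⊗ B) i j = max_l (A i l + B l j)`. -/
def tropMul {N : ℕ} (A B : TMat N) : TMat N :=
  fun i j => Finset.univ.sup fun l => A i l + B l j

/-- The tropical identity matrix (`0` on the diagonal, `-∞` off it). -/
def tropId (N : ℕ) : TMat N := fun i j => if i = j then 0 else ⊥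

/-- `k`-fold tropical power. -/
def tropPow {N : ℕ} (A : TMat N) : ℕ → TMat N
  | 0 => tropId N
  | k + 1 => tropMul A (tropPow A k)

/-- The all-zero tropical matrix `𝟎`. -/
def zeroMat (N : ℕ) : TMat N := fun _ _ => 0

/-- Tropical matrix-vector product for a real vector: `(A ⊗ x) i = max_j (A i j + x j)`. -/
def tropMulVec {N : ℕ} (A : TMat N) (x : Fin N → ℝ) (i : Fin N) : WithBot ℝ :=
  Finset.univ.sup fun j => A i j + (x j : WithBot ℝ)

/-- The maximum of the entries of a real vector, viewed in `WithBot ℝ`. -/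
def maxVal {N : ℕ} (x : Fin N → ℝ) : WithBot ℝ :=
  Finset.univ.sup fun j => (x j : WithBot ℝ)

/-- The edge relation of the dependency graph `G(A)`:
`Edge A i j` means there is an edge `i → j`, i.e. `A j i = 0`. -/
def Edge {N : ℕ} (A : TMat N) (i j : Fin N) : Prop := A j i = 0

/-- Strong connectivity of a digraph on `Fin N` given by its edge relation. -/
def StronglyConnected {N : ℕ} (E : Fin N → Fin N → Prop) : Prop :=
  ∀ i j, Relation.ReflTransGen E i j

/-- `walkLe E k i j`: there is a directed walk from `i` to `j` of length at most `k`. -/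
def walkLe {N : ℕ} (E : Fin N → Fin N → Prop) : ℕ → Fin N → Fin N → Prop
  | 0 => Eq
  | k + 1 => fun i j => walkLe E k i j ∨ ∃ l, E i l ∧ walkLe E k l j

/-!
A single row `r` of a tropical matrix satisfies `max_l (r l + x l) = max_l x l` for every real
`x` exactly when `r = 0`. Testing with `x = 0` gives `r ≤ 0`; testing with the indicator vector
of `j` then forces the maximum to be attained at `j`, where `r j + 1 = 1`.
-/

section Row

variable {ι : Type*} [Fintype ι] {r : ι → WithBot ℝ}

theorem le_zero_of_forall_sup_add_eq_sup
    (h : ∀ x : ι → ℝ, univ.sup (fun l => r l + x l) = univ.sup fun l => (x l : WithBot ℝ))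
    (l : ι) : r l ≤ 0 := by
  have h0 : univ.sup r ≤ 0 := by
    simpa using (h 0).le.trans (Finset.sup_le fun _ _ => le_rfl)
  exact (le_sup (mem_univ l)).trans h0

theorem zero_le_of_forall_sup_add_eq_sup
    (h : ∀ x : ι → ℝ, univ.sup (fun l => r l + x l) = univ.sup fun l => (x l : WithBot ℝ))
    (j : ι) : 0 ≤ r j := by
  classical
  set x : ι → ℝ := Pi.single j 1
  have hsup : (1 : WithBot ℝ) ≤ univ.sup fun l => r l + x l := by
    rw [h]
    exact le_sup_of_le (mem_univ j) (by simp [x])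
  obtain ⟨l, -, hl⟩ := exists_mem_eq_sup univ ⟨j, mem_univ j⟩ fun l => r l + x l
  rw [hl] at hsup
  by_cases hlj : l = j
  · subst hlj
    refine WithBot.le_of_add_le_add_right (z := ((1 : ℝ) : WithBot ℝ)) WithBot.coe_ne_bot ?_
    simpa [x] using hsup
  · have hr := le_zero_of_forall_sup_add_eq_sup h l
    simp only [x, Pi.single_eq_of_ne hlj, WithBot.coe_zero, add_zero] at hsup
    exact absurd (hsup.trans hr) (by norm_num)

theorem forall_sup_add_eq_sup_iff :
    (∀ x : ι → ℝ, univ.sup (fun l => r l + x l) = univ.sup fun l => (x l : WithBot ℝ)) ↔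
      r = 0 := by
  refine ⟨fun h => funext fun j => ?_, fun hr x => by simp [hr]⟩
  exact le_antisymm (le_zero_of_forall_sup_add_eq_sup h j) (zero_le_of_forall_sup_add_eq_sup h j)

end Row

theorem forall_tropMulVec_eq_maxVal_iff {N : ℕ} (P : TMat N) :
    (∀ x : Fin N → ℝ, ∀ i, tropMulVec P x i = maxVal x) ↔ P = zeroMat N := by
  simp only [tropMulVec, maxVal, forall_comm (α := Fin N → ℝ), forall_sup_add_eq_sup_iff]
  exact ⟨fun h => funext h, fun h i => congrFun h i⟩

theorem maxConsensus_iff_tropPow_zeroMat_general {N : ℕ}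
    {A : TMat N} :
    (∃ k, ∀ x : Fin N → ℝ, ∀ i, tropMulVec (tropPow A k) x i = maxVal x) ↔
    ∃ k, tropPow A k = zeroMat N :=
  exists_congr fun k => forall_tropMulVec_eq_maxVal_iff (tropPow A k)

/-- The max-consensus protocol `x(k) = A^k ⊗ x(0)` converges to consensus for all
initial conditions iff `∃ k, A^k = 𝟎`. -/
theorem maxConsensus_iff_tropPow_zeroMat {N : ℕ} (hN : 1 ≤ N)
    {A : TMat N} (hA : IsTropAdj A) :
    (∃ k, ∀ x : Fin N → ℝ, ∀ i, tropMulVec (tropPow A k) x i = maxVal x) ↔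
    ∃ k, tropPow A k = zeroMat N :=
  maxConsensus_iff_tropPow_zeroMat_general
end

section
/- The max-consensus protocol over a fixed network converges for all initial conditions if and only if the dependency graph G(A) is strongly connected. Equivalently: there exists k ∈ ℕ with A^k = 𝟎 if and only if G(A) is strongly connected. -/
open Finset

/-! For a matrix with nonpositive entries, a tropical product entry is `0` exactly when some
summand is `0`, so `(A^k) i j = 0` iff `G(A)` has a walk from `j` to `i` of length at most `k`;
the zero diagonal (self-loops) is what turns "exactly `k`" into "at most `k`". Finitely many
pairs of nodes then give a uniform bound on the walk lengths in a strongly connected graph. -/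

theorem add_eq_zero_iff_of_nonpos {α : Type*} [AddZeroClass α] [PartialOrder α] [AddLeftMono α]
    [AddRightMono α] {a b : α} (ha : a ≤ 0) (hb : b ≤ 0) : a + b = 0 ↔ a = 0 ∧ b = 0 :=
  add_eq_zero_iff_of_nonneg (α := αᵒᵈ) ha hb

theorem Finset.sup_eq_iff_exists_eq_of_le {ι α : Type*} [LinearOrder α] [OrderBot α]
    {s : Finset ι} {f : ι → α} {a : α} (ha : ⊥ < a) (hf : ∀ i ∈ s, f i ≤ a) :
    s.sup f = a ↔ ∃ i ∈ s, f i = a := by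
  rw [le_antisymm_iff, and_iff_right (Finset.sup_le hf), Finset.le_sup_iff ha]
  exact exists_congr fun i => and_congr_right fun hi => ⟨(hf i hi).antisymm, ge_of_eq⟩

section walkLe

variable {N : ℕ} {E : Fin N → Fin N → Prop}

theorem walkLe_mono {k k' : ℕ} (h : k ≤ k') {i j : Fin N} (hw : walkLe E k i j) :
    walkLe E k' i j := by
  induction h with
  | refl => exact hw
  | step _ ih => exact Or.inl ih

theorem walkLe_succ_iff' {k : ℕ} {i j : Fin N} :
    walkLe E (k + 1) i j ↔ walkLe E k i j ∨ ∃ l, walkLe E k i l ∧ E l j := by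
  induction k generalizing i j with
  | zero => simp [walkLe]
  | succ k ih =>
    simp only [walkLe] at ih ⊢
    simp only [ih]
    grind

theorem walkLe_succ_iff_of_refl (hE : ∀ i, E i i) {k : ℕ} {i j : Fin N} :
    walkLe E (k + 1) i j ↔ ∃ l, walkLe E k i l ∧ E l j := by
  rw [walkLe_succ_iff', or_iff_right_of_imp fun h => ⟨j, h, hE j⟩]

theorem reflTransGen_iff_exists_walkLe {i j : Fin N} :
    Relation.ReflTransGen E i j ↔ ∃ n, walkLe E n i j := by
  constructor
  · intro h
    induction h using Relation.ReflTransGen.head_induction_on with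
    | refl => exact ⟨0, rfl⟩
    | head he _ ih =>
      obtain ⟨n, hn⟩ := ih
      exact ⟨n + 1, Or.inr ⟨_, he, hn⟩⟩
  · rintro ⟨n, hn⟩
    induction n generalizing i with
    | zero => exact hn ▸ Relation.ReflTransGen.refl
    | succ n ih =>
      rcases hn with hn | ⟨l, hl, hn⟩
      · exact ih hn
      · exact Relation.ReflTransGen.head hl (ih hn)

theorem StronglyConnected.exists_forall_walkLe (h : StronglyConnected E) :
    ∃ n, ∀ i j, walkLe E n i j := by
  choose f hf using fun p : Fin N × Fin N => reflTransGen_iff_exists_walkLe.1 (h p.1 p.2)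
  exact ⟨univ.sup f, fun i j => walkLe_mono (le_sup (mem_univ (i, j))) (hf (i, j))⟩

end walkLe

section tropical

variable {N : ℕ} {A B : TMat N}

theorem IsTropAdj.apply_nonpos (hA : IsTropAdj A) (i j : Fin N) : A i j ≤ 0 := by
  rcases hA.1 i j with h | h <;> simp [h]

theorem tropMul_apply_nonpos (hA : ∀ i j, A i j ≤ 0) (hB : ∀ i j, B i j ≤ 0) (i j : Fin N) :
    tropMul A B i j ≤ 0 :=
  Finset.sup_le fun l _ => add_nonpos (hA i l) (hB l j)

theorem tropMul_apply_eq_zero_iff (hA : ∀ i j, A i j ≤ 0) (hB : ∀ i j, B i j ≤ 0)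
    (i j : Fin N) : tropMul A B i j = 0 ↔ ∃ l, A i l = 0 ∧ B l j = 0 := by
  rw [tropMul, Finset.sup_eq_iff_exists_eq_of_le (WithBot.bot_lt_coe 0)
    fun l _ => add_nonpos (hA i l) (hB l j)]
  simp only [mem_univ, true_and, add_eq_zero_iff_of_nonpos (hA i _) (hB _ j)]

theorem tropPow_apply_nonpos (hA : ∀ i j, A i j ≤ 0) (k : ℕ) (i j : Fin N) :
    tropPow A k i j ≤ 0 := by
  induction k generalizing i j with
  | zero => by_cases h : i = j <;> simp [tropPow, tropId, h]
  | succ k ih => exact tropMul_apply_nonpos hA ih i j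

theorem tropPow_apply_eq_zero_iff (hA : ∀ i j, A i j ≤ 0) (hdiag : ∀ i, A i i = 0) (k : ℕ)
    (i j : Fin N) : tropPow A k i j = 0 ↔ walkLe (Edge A) k j i := by
  induction k generalizing i j with
  | zero => simp [tropPow, tropId, walkLe, eq_comm]
  | succ k ih =>
    rw [tropPow, tropMul_apply_eq_zero_iff hA (tropPow_apply_nonpos hA k),
      walkLe_succ_iff_of_refl hdiag]
    simp only [ih, Edge, and_comm]

theorem tropPow_eq_zeroMat_iff (hA : IsTropAdj A) (k : ℕ) :
    tropPow A k = zeroMat N ↔ ∀ i j, walkLe (Edge A) k i j := by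
  rw [← Matrix.ext_iff, forall_comm]
  exact forall₂_congr fun j i => tropPow_apply_eq_zero_iff hA.apply_nonpos hA.2 k i j

end tropical

/-- The max-consensus protocol converges for all initial conditions iff `G(A)` is
strongly connected; equivalently, `∃ k, A^k = 𝟎` iff `G(A)` is strongly connected. -/
theorem tropPow_zeroMat_iff_stronglyConnected {N : ℕ} {A : TMat N}
    (hA : IsTropAdj A) :
    (∃ k, tropPow A k = zeroMat N) ↔ StronglyConnected (Edge A) := by
  constructor
  · rintro ⟨k, hk⟩ i j
    exact reflTransGen_iff_exists_walkLe.2 ⟨k, (tropPow_eq_zeroMat_iff hA k).1 hk i j⟩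
  · intro h
    obtain ⟨n, hn⟩ := h.exists_forall_walkLe
    exact ⟨n, (tropPow_eq_zeroMat_iff hA n).2 hn⟩
end

section
/- The switching-topology max-consensus protocol x(k+1) = A_k ⊗ x(k) converges to consensus for all initial conditions at step k+1 if and only if the tropical product A_k ⊗ A_{k-1} ⊗ ⋯ ⊗ A_0 equals the all-zero matrix 𝟎. -/
/-!
For `M = A_k ⊗ ⋯ ⊗ A_0`, the identity `M ⊗ x = (max x) 𝟏` for every real `x` forces `M = 𝟎`:
the input `x = 0` gives `M i j ≤ 0`, and then the input `x = e_j` (a single `1`, zeros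
elsewhere) can only reach the value `1` in row `i` through the term `M i j + 1`, so `M i j = 0`.
-/

open Finset

/-- The product `A_k ⊗ A_{k-1} ⊗ ⋯ ⊗ A_0` of a switching sequence of matrices. -/
def seqProd {N : ℕ} (A : ℕ → TMat N) : ℕ → TMat N
  | 0 => A 0
  | k + 1 => tropMul (A (k + 1)) (seqProd A k)

variable {N : ℕ}

lemma tropMulVec_zeroMat (x : Fin N → ℝ) (i : Fin N) :
    tropMulVec (zeroMat N) x i = maxVal x := by
  simp [tropMulVec, maxVal, zeroMat]

lemma maxVal_single (j : Fin N) (c : ℝ) (hc : 0 ≤ c) : maxVal (Pi.single j c) = c := by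
  refine le_antisymm (Finset.sup_le fun l _ => ?_) ?_
  · rcases eq_or_ne l j with rfl | hl
    · simp
    · simpa [Pi.single_apply, hl] using hc
  · calc (c : WithBot ℝ) = ((Pi.single j c : Fin N → ℝ) j : WithBot ℝ) := by simp
      _ ≤ maxVal (Pi.single j c) :=
        le_sup (f := fun l => ((Pi.single j c : Fin N → ℝ) l : WithBot ℝ)) (mem_univ j)

lemma le_zero_of_tropMulVec_zero_eq_maxVal {M : TMat N} {i : Fin N}
    (h : tropMulVec M (0 : Fin N → ℝ) i = maxVal (0 : Fin N → ℝ)) (l : Fin N) : M i l ≤ 0 :=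
  calc M i l = M i l + ((0 : Fin N → ℝ) l : WithBot ℝ) := by simp
    _ ≤ tropMulVec M 0 i :=
      le_sup (f := fun m => M i m + ((0 : Fin N → ℝ) m : WithBot ℝ)) (mem_univ l)
    _ = 0 := by rw [h, ← Pi.single_zero l, maxVal_single l 0 le_rfl, WithBot.coe_zero]

lemma eq_zero_of_tropMulVec_single_eq_maxVal {M : TMat N} {i j : Fin N}
    (hle : ∀ l, M i l ≤ 0) (h : tropMulVec M (Pi.single j 1) i = maxVal (Pi.single j 1)) :
    M i j = 0 := by
  rw [maxVal_single j 1 zero_le_one] at h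
  obtain ⟨l, -, hl⟩ := exists_mem_eq_sup univ ⟨j, mem_univ j⟩
    (fun m => M i m + ((Pi.single j 1 : Fin N → ℝ) m : WithBot ℝ))
  rw [← tropMulVec, h] at hl
  rcases eq_or_ne l j with rfl | hlj
  · simp only [Pi.single_eq_same, WithBot.coe_one] at hl
    have h1 : (1 : WithBot ℝ) ≠ ⊥ := WithBot.coe_ne_bot
    exact (WithBot.add_right_cancel h1 (by simpa using hl)).symm
  · have hl1 : M i l = 1 := by simpa [Pi.single_apply, hlj] using hl.symm
    exact absurd (hl1 ▸ hle l) (by norm_num)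

lemma tropMulVec_eq_maxVal_iff {M : TMat N} :
    (∀ x : Fin N → ℝ, ∀ i, tropMulVec M x i = maxVal x) ↔ M = zeroMat N := by
  refine ⟨fun h => ?_, fun h x i => h ▸ tropMulVec_zeroMat x i⟩
  funext i j
  exact eq_zero_of_tropMulVec_single_eq_maxVal
    (le_zero_of_tropMulVec_zero_eq_maxVal (h 0 i)) (h _ i)

theorem switching_consensus_iff_seqProd_zeroMat_general {N : ℕ}
    (A : ℕ → TMat N) (k : ℕ) :
    (∀ x : Fin N → ℝ, ∀ i, tropMulVec (seqProd A k) x i = maxVal x) ↔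
    seqProd A k = zeroMat N :=
  tropMulVec_eq_maxVal_iff

/-- The switching-topology max-consensus protocol `x(k+1) = A_k ⊗ x(k)` reaches
consensus at step `k+1` for all initial conditions iff `A_k ⊗ ⋯ ⊗ A_0 = 𝟎`. -/
theorem switching_consensus_iff_seqProd_zeroMat {N : ℕ} (hN : 1 ≤ N)
    (A : ℕ → TMat N) (hA : ∀ n, IsTropAdj (A n)) (k : ℕ) :
    (∀ x : Fin N → ℝ, ∀ i, tropMulVec (seqProd A k) x i = maxVal x) ↔
    seqProd A k = zeroMat N :=
  switching_consensus_iff_seqProd_zeroMat_general A k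
end
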